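/- arXiv:0911.3040 — 7 statements merged into one kernel-verified Lean document; each statement's English description precedes it below -/
import Mathlib

section
/- Let A = (a_{ij}) (1 ≤ i,j ≤ 2) be a 2×2 integer matrix whose characteristic polynomial is irreducible over ℚ, and set Q_A(x,y) = (a₁₂x² + (a₂₂ − a₁₁)xy − a₂₁y²) / gcd(a₁₂, a₂₁, a₂₂ − a₁₁). Then A is of Frobenius type if and only if the equation |Q_A(x,y)| = 1 has an integer solution (x,y). -/
/-- The Frobenius matrix `M_{a₁,a₂}` with rows `(0,1)` and `(a₂,a₁)`. -/
def frobeniusMatrix2 (a₁ a₂ : ℤ) : Matrix (Fin 2) (Fin 2) ℤ :=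
  !![0, 1; a₂, a₁]

/-- A 2×2 integer matrix `A` is of Frobenius type if there exist integers `a₁, a₂`
and `X ∈ SL(2,ℤ)` such that `X A X⁻¹` commutes with `M_{a₁,a₂}`. -/
def IsFrobeniusType2 (A : Matrix (Fin 2) (Fin 2) ℤ) : Prop :=
  ∃ (a₁ a₂ : ℤ) (X : Matrix.SpecialLinearGroup (Fin 2) ℤ),
    Commute ((X : Matrix (Fin 2) (Fin 2) ℤ) * A * ((X⁻¹ : Matrix.SpecialLinearGroup (Fin 2) ℤ) : Matrix (Fin 2) (Fin 2) ℤ))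
      (frobeniusMatrix2 a₁ a₂)

/-- The form `Q_A(x,y) = (a₁₂x² + (a₂₂ − a₁₁)xy − a₂₁y²) / gcd(a₁₂, a₂₁, a₂₂ − a₁₁)`,
viewed with rational values. -/
def QForm (A : Matrix (Fin 2) (Fin 2) ℤ) (x y : ℤ) : ℚ :=
  ((A 0 1 : ℚ) * (x : ℚ) ^ 2 + ((A 1 1 : ℚ) - (A 0 0 : ℚ)) * (x : ℚ) * (y : ℚ)
      - (A 1 0 : ℚ) * (y : ℚ) ^ 2)
    / ((Int.gcd (A 0 1) (Int.gcd (A 1 0) (A 1 1 - A 0 0)) : ℤ) : ℚ)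

/-!
Writing `c(B) = gcd(b₁₂, b₂₁, b₂₂ - b₁₁)`, the divisors of `c(B)` are exactly the `d` with
`B ≡ s • 1 (mod d)` for some scalar `s`, so `c` is invariant under conjugation. A matrix `B`
commutes with some `M_{a₁,a₂}` iff `b₁₂` divides `b₂₁` and `b₂₂ - b₁₁`, i.e. iff `|b₁₂| = c(B)`.
For `X ∈ SL(2,ℤ)` with first row `(x, y)`, the `(1,2)` entry of `X A X⁻¹` is `c(A) · Q_A(x, y)`,
and first rows of `SL(2,ℤ)` are exactly the coprime pairs. A solution of `|Q_A(x,y)| = 1` is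
automatically coprime, since `Q_A(g x, g y) = g² Q_A(x, y)` and `Q_A` is integral.
-/

open Matrix Polynomial
open scoped MatrixGroups

def qFormNum {R : Type*} [CommRing R] (A : Matrix (Fin 2) (Fin 2) R) (x y : R) : R :=
  A 0 1 * x ^ 2 + (A 1 1 - A 0 0) * x * y - A 1 0 * y ^ 2

/-- The gcd of the entries of `A - a₁₁ • 1`. -/
def offScalarContent (A : Matrix (Fin 2) (Fin 2) ℤ) : ℕ :=
  Int.gcd (A 0 1) (Int.gcd (A 1 0) (A 1 1 - A 0 0))

section CommRing

variable {R : Type*} [CommRing R]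

theorem exists_eq_smul_one_add_smul_iff (d : R) (B : Matrix (Fin 2) (Fin 2) R) :
    (∃ (s : R) (C : Matrix (Fin 2) (Fin 2) R), B = s • 1 + d • C) ↔
      d ∣ B 0 1 ∧ d ∣ B 1 0 ∧ d ∣ B 1 1 - B 0 0 := by
  constructor
  · rintro ⟨s, C, rfl⟩
    simp only [Matrix.add_apply, Matrix.smul_apply, one_apply_ne, one_apply_eq, ne_eq,
      zero_ne_one, one_ne_zero, not_false_eq_true, smul_eq_mul, mul_zero, zero_add, mul_one]
    exact ⟨dvd_mul_right _ _, dvd_mul_right _ _, ⟨C 1 1 - C 0 0, by ring⟩⟩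
  · rintro ⟨⟨c₀₁, h₀₁⟩, ⟨c₁₀, h₁₀⟩, ⟨c₁₁, h₁₁⟩⟩
    refine ⟨B 0 0, !![0, c₀₁; c₁₀, c₁₁], ?_⟩
    ext i j
    fin_cases i <;> fin_cases j <;> simp [h₀₁, h₁₀, ← h₁₁]

theorem mul_mul_adjugate_apply_zero_one (A X : Matrix (Fin 2) (Fin 2) R) :
    (X * A * X.adjugate) 0 1 = qFormNum A (X 0 0) (X 0 1) := by
  simp only [adjugate_fin_two, mul_apply, Fin.sum_univ_two, of_apply, cons_val', cons_val_one,
    cons_val_fin_one, cons_val_zero, qFormNum]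
  ring

theorem qFormNum_mul_mul (A : Matrix (Fin 2) (Fin 2) R) (g x y : R) :
    qFormNum A (g * x) (g * y) = g ^ 2 * qFormNum A x y := by
  simp only [qFormNum]
  ring

end CommRing

theorem commute_frobeniusMatrix2_iff (B : Matrix (Fin 2) (Fin 2) ℤ) (a₁ a₂ : ℤ) :
    Commute B (frobeniusMatrix2 a₁ a₂) ↔ B 1 0 = a₂ * B 0 1 ∧ B 1 1 - B 0 0 = a₁ * B 0 1 := by
  rw [Commute, SemiconjBy, ← Matrix.ext_iff]
  simp only [Fin.forall_fin_two, frobeniusMatrix2, mul_apply, Fin.sum_univ_two, of_apply,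
    cons_val', cons_val_zero, cons_val_one, empty_val', cons_val_fin_one]
  constructor
  · rintro ⟨⟨h₀₀, h₀₁⟩, -⟩
    constructor <;> linarith
  · rintro ⟨h₁₀, h₁₁⟩
    refine ⟨⟨?_, ?_⟩, ?_, ?_⟩
    · linear_combination -h₁₀
    · linear_combination -h₁₁
    · linear_combination a₂ * h₁₁ - a₁ * h₁₀
    · linear_combination h₁₀

theorem exists_commute_frobeniusMatrix2_iff (B : Matrix (Fin 2) (Fin 2) ℤ) :
    (∃ a₁ a₂, Commute B (frobeniusMatrix2 a₁ a₂)) ↔ B 0 1 ∣ B 1 0 ∧ B 0 1 ∣ B 1 1 - B 0 0 := by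
  simp only [commute_frobeniusMatrix2_iff, Dvd.dvd, mul_comm (B 0 1)]
  exact ⟨fun ⟨a₁, a₂, h₁₀, h₁₁⟩ => ⟨⟨a₂, h₁₀⟩, ⟨a₁, h₁₁⟩⟩,
    fun ⟨⟨a₂, h₁₀⟩, ⟨a₁, h₁₁⟩⟩ => ⟨a₁, a₂, h₁₀, h₁₁⟩⟩

theorem dvd_offScalarContent_iff (d : ℤ) (B : Matrix (Fin 2) (Fin 2) ℤ) :
    d ∣ (offScalarContent B : ℤ) ↔ d ∣ B 0 1 ∧ d ∣ B 1 0 ∧ d ∣ B 1 1 - B 0 0 := by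
  rw [offScalarContent, Int.dvd_coe_gcd_iff, Int.dvd_coe_gcd_iff]

theorem offScalarContent_dvd_qFormNum (A : Matrix (Fin 2) (Fin 2) ℤ) (x y : ℤ) :
    (offScalarContent A : ℤ) ∣ qFormNum A x y := by
  obtain ⟨h₀₁, h₁₀, h₁₁⟩ := (dvd_offScalarContent_iff _ A).1 dvd_rfl
  exact dvd_sub (dvd_add (h₀₁.mul_right _) ((h₁₁.mul_right _).mul_right _)) (h₁₀.mul_right _)

theorem dvd_offScalarContent_mul_mul {d : ℤ} {B X Y : Matrix (Fin 2) (Fin 2) ℤ}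
    (hd : d ∣ offScalarContent B) (hXY : X * Y = 1) : d ∣ offScalarContent (X * B * Y) := by
  obtain ⟨s, C, rfl⟩ :=
    (exists_eq_smul_one_add_smul_iff d B).2 ((dvd_offScalarContent_iff d B).1 hd)
  rw [dvd_offScalarContent_iff, ← exists_eq_smul_one_add_smul_iff]
  refine ⟨s, X * C * Y, ?_⟩
  simp only [Matrix.mul_add, Matrix.add_mul, Matrix.mul_smul, Matrix.smul_mul, Matrix.mul_one, hXY]

theorem offScalarContent_mul_mul {B X Y : Matrix (Fin 2) (Fin 2) ℤ} (hXY : X * Y = 1)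
    (hYX : Y * X = 1) : offScalarContent (X * B * Y) = offScalarContent B := by
  refine Nat.dvd_antisymm (Int.natCast_dvd_natCast.1 ?_)
    (Int.natCast_dvd_natCast.1 (dvd_offScalarContent_mul_mul dvd_rfl hXY))
  have hB : Y * (X * B * Y) * X = B := by
    simp only [← Matrix.mul_assoc, hYX, Matrix.one_mul]
    simp only [Matrix.mul_assoc, hYX, Matrix.mul_one]
  simpa only [hB] using dvd_offScalarContent_mul_mul (B := X * B * Y) dvd_rfl hYX

theorem offScalarContent_conj (A : Matrix (Fin 2) (Fin 2) ℤ) (X : SL(2, ℤ)) :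
    offScalarContent ((X : Matrix (Fin 2) (Fin 2) ℤ) * A * ((X⁻¹ : SL(2, ℤ)) :
      Matrix (Fin 2) (Fin 2) ℤ)) = offScalarContent A :=
  offScalarContent_mul_mul (by simp [mul_adjugate]) (by simp [adjugate_mul])

theorem conj_apply_zero_one (A : Matrix (Fin 2) (Fin 2) ℤ) (X : SL(2, ℤ)) :
    ((X : Matrix (Fin 2) (Fin 2) ℤ) * A * ((X⁻¹ : SL(2, ℤ)) :
      Matrix (Fin 2) (Fin 2) ℤ)) 0 1 = qFormNum A (X 0 0) (X 0 1) := by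
  rw [Matrix.SpecialLinearGroup.coe_inv]
  exact mul_mul_adjugate_apply_zero_one A X

theorem natAbs_eq_offScalarContent_iff (B : Matrix (Fin 2) (Fin 2) ℤ) :
    (B 0 1).natAbs = offScalarContent B ↔ B 0 1 ∣ B 1 0 ∧ B 0 1 ∣ B 1 1 - B 0 0 := by
  constructor
  · intro h
    have hB : B 0 1 ∣ (offScalarContent B : ℤ) := h ▸ Int.dvd_natAbs.2 dvd_rfl
    exact ((dvd_offScalarContent_iff _ B).1 hB).2
  · rintro ⟨h₁₀, h₁₁⟩
    exact (Int.gcd_eq_natAbs_left (Int.dvd_coe_gcd h₁₀ h₁₁)).symm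

theorem exists_specialLinearGroup_row_eq_of_isCoprime {x y : ℤ} (h : IsCoprime x y) :
    ∃ X : SL(2, ℤ), X 0 0 = x ∧ X 0 1 = y := by
  obtain ⟨u, v, huv⟩ := h
  exact ⟨⟨!![x, y; -v, u], by rw [det_fin_two_of]; linear_combination huv⟩, rfl, rfl⟩

theorem isCoprime_of_natAbs_qFormNum_eq {A : Matrix (Fin 2) (Fin 2) ℤ} {x y : ℤ}
    (hc : offScalarContent A ≠ 0) (h : (qFormNum A x y).natAbs = offScalarContent A) :
    IsCoprime x y := by
  rw [Int.isCoprime_iff_gcd_eq_one]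
  set g := Int.gcd x y
  obtain ⟨x', hx⟩ : (g : ℤ) ∣ x := Int.gcd_dvd_left x y
  obtain ⟨y', hy⟩ : (g : ℤ) ∣ y := Int.gcd_dvd_right x y
  obtain ⟨m, hm⟩ := offScalarContent_dvd_qFormNum A x' y'
  have hF : qFormNum A x y = (g : ℤ) ^ 2 * m * offScalarContent A := by
    rw [hx, hy, qFormNum_mul_mul, hm]
    ring
  rw [hF, Int.natAbs_mul, Int.natAbs_mul, Int.natAbs_pow, Int.natAbs_natCast,
    Int.natAbs_natCast, Nat.mul_eq_right hc] at h
  exact (Nat.pow_eq_one.1 (Nat.eq_one_of_mul_eq_one_right h)).resolve_right two_ne_zero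

theorem offScalarContent_ne_zero_of_irreducible_charpoly {A : Matrix (Fin 2) (Fin 2) ℤ}
    (hirr : Irreducible (A.charpoly.map (Int.castRingHom ℚ))) : offScalarContent A ≠ 0 := by
  intro h
  obtain ⟨s, C, hA⟩ := (exists_eq_smul_one_add_smul_iff 0 A).2
    ((dvd_offScalarContent_iff 0 A).1 (by simp [h]))
  rw [hA, zero_smul, add_zero, smul_one_eq_diagonal, charpoly_diagonal, Finset.prod_const,
    Finset.card_univ, Fintype.card_fin, Polynomial.map_pow] at hirr
  exact not_irreducible_pow (by norm_num) hirr

theorem abs_QForm_eq_one_iff {A : Matrix (Fin 2) (Fin 2) ℤ} (hc : offScalarContent A ≠ 0)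
    (x y : ℤ) : |QForm A x y| = 1 ↔ (qFormNum A x y).natAbs = offScalarContent A := by
  have hQ : QForm A x y = ((qFormNum A x y : ℤ) : ℚ) / (offScalarContent A : ℚ) := by
    simp [QForm, qFormNum, offScalarContent]
  rw [hQ, abs_div, Nat.abs_cast, div_eq_one_iff_eq (by exact_mod_cast hc), ← Int.cast_abs,
    Int.abs_eq_natAbs]
  exact_mod_cast Iff.rfl

theorem isFrobeniusType2_iff (A : Matrix (Fin 2) (Fin 2) ℤ) :
    IsFrobeniusType2 A ↔ ∃ X : SL(2, ℤ),
      (qFormNum A (X 0 0) (X 0 1)).natAbs = offScalarContent A := by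
  have key (X : SL(2, ℤ)) :
      (∃ a₁ a₂, Commute ((X : Matrix (Fin 2) (Fin 2) ℤ) * A *
        ((X⁻¹ : SL(2, ℤ)) : Matrix (Fin 2) (Fin 2) ℤ))
        (frobeniusMatrix2 a₁ a₂)) ↔ (qFormNum A (X 0 0) (X 0 1)).natAbs = offScalarContent A := by
    rw [exists_commute_frobeniusMatrix2_iff, ← natAbs_eq_offScalarContent_iff,
      offScalarContent_conj, conj_apply_zero_one]
  simp only [← key]
  exact ⟨fun ⟨a₁, a₂, X, h⟩ => ⟨X, a₁, a₂, h⟩, fun ⟨X, a₁, a₂, h⟩ => ⟨a₁, a₂, X, h⟩⟩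

/-- A 2×2 integer matrix with irreducible characteristic polynomial over ℚ is of
Frobenius type iff `|Q_A(x,y)| = 1` has an integer solution. -/
theorem frobenius_type_iff_QForm_represents_one
    (A : Matrix (Fin 2) (Fin 2) ℤ)
    (hirr : Irreducible (A.charpoly.map (Int.castRingHom ℚ))) :
    IsFrobeniusType2 A ↔ ∃ x y : ℤ, |QForm A x y| = 1 := by
  have hc := offScalarContent_ne_zero_of_irreducible_charpoly hirr
  simp only [isFrobeniusType2_iff, abs_QForm_eq_one_iff hc]
  constructor
  · rintro ⟨X, hX⟩
    exact ⟨_, _, hX⟩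
  · rintro ⟨x, y, hxy⟩
    obtain ⟨X, rfl, rfl⟩ :=
      exists_specialLinearGroup_row_eq_of_isCoprime (isCoprime_of_natAbs_qFormNum_eq hc hxy)
    exact ⟨X, hxy⟩
end

section
/- Let C be a k×k integer matrix whose characteristic polynomial is irreducible over ℚ. Then the set Ξ̄(C) of all k×k integer matrices commuting with C is an additive group isomorphic to ℤ^k; equivalently, Ξ̄(C) is a free ℤ-module of rank k. -/
/-!
Over `ℚ`, irreducibility of the characteristic polynomial `p` of `A` makes every nonzero
vector `v` cyclic: if `q(A) v = 0` but `p ∤ q`, then `a p + b q = 1` for some `a, b`, and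
`v = a(A) p(A) v + b(A) q(A) v = 0`. So `v, A v, …, A^(k-1) v` is a basis, and a matrix
commuting with `A` is determined by its value on `v`. Hence `X ↦ X e₀` embeds `Ξ̄(C)` into
`ℤ^k`, while `C^0, …, C^(k-1)` are `k` independent elements of `Ξ̄(C)`; being a submodule of a
free module over a PID, `Ξ̄(C)` is free, of rank `k`.
-/

/-- The set `Ξ̄(C)` of all `k×k` integer matrices commuting with `C`,
as a `ℤ`-submodule (in particular an additive subgroup) of the matrices. -/
def commutantZ (k : ℕ) (C : Matrix (Fin k) (Fin k) ℤ) :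
    Submodule ℤ (Matrix (Fin k) (Fin k) ℤ) where
  carrier := {X | X * C = C * X}
  add_mem' := by
    intro a b ha hb
    simp only [Set.mem_setOf_eq] at *
    rw [add_mul, mul_add, ha, hb]
  zero_mem' := by simp
  smul_mem' := by
    intro c x hx
    simp only [Set.mem_setOf_eq] at *
    rw [smul_mul_assoc, mul_smul_comm, hx]

open Polynomial Matrix

theorem RingHom.comp_mulVec {R S m n : Type*} [NonAssocSemiring R] [NonAssocSemiring S] [Fintype n]
    (f : R →+* S) (M : Matrix m n R) (w : n → R) : f ∘ (M *ᵥ w) = M.map f *ᵥ (f ∘ w) :=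
  funext (f.map_mulVec M w)

namespace Matrix

section Field

variable {K n : Type*} [Field K] [Fintype n] [DecidableEq n] {A : Matrix n n K} {v : n → K}

theorem charpoly_dvd_of_aeval_mulVec_eq_zero (hA : Irreducible A.charpoly) (hv : v ≠ 0)
    {q : K[X]} (hq : aeval A q *ᵥ v = 0) : A.charpoly ∣ q := by
  by_contra hdvd
  obtain ⟨a, b, hab⟩ := hA.coprime_iff_not_dvd.2 hdvd
  apply hv
  calc v = aeval A (a * A.charpoly + b * q) *ᵥ v := by rw [hab, map_one, one_mulVec]
    _ = 0 := by simp [← mulVec_mulVec, hq, aeval_self_charpoly]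

theorem linearIndependent_pow_mulVec (hA : Irreducible A.charpoly) (hv : v ≠ 0) :
    LinearIndependent K fun i : Fin (Fintype.card n) => (A ^ (i : ℕ)) *ᵥ v := by
  refine Fintype.linearIndependent_iff.2 fun c hc i => ?_
  set q : K[X] := ∑ j : Fin (Fintype.card n), C (c j) * X ^ (j : ℕ)
  have hq : aeval A q *ᵥ v = 0 := by
    simpa only [q, map_sum, map_mul, aeval_C, map_pow, aeval_X, ← Algebra.smul_def, sum_mulVec,
      smul_mulVec] using hc
  have hq0 : q = 0 := eq_zero_of_dvd_of_degree_lt (charpoly_dvd_of_aeval_mulVec_eq_zero hA hv hq)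
    (A.charpoly_degree_eq_dim ▸ degree_sum_fin_lt c)
  simpa [q, finsetSum_coeff, coeff_C_mul, coeff_X_pow, Fin.val_eq_val] using
    congrArg (coeff · i) hq0

theorem eq_zero_of_commute_of_mulVec_eq_zero (hA : Irreducible A.charpoly) (hv : v ≠ 0)
    {B : Matrix n n K} (hBA : Commute B A) (hBv : B *ᵥ v = 0) : B = 0 := by
  have hspan := (linearIndependent_pow_mulVec hA hv).span_eq_top_of_card_eq_finrank'
    (by simp)
  have hB : B.mulVecLin = 0 := LinearMap.ext_on_range hspan fun i => by
    rw [mulVecLin_apply, mulVec_mulVec, (hBA.pow_right i).eq, ← mulVec_mulVec, hBv, mulVec_zero,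
      LinearMap.zero_apply]
  exact ext_iff_mulVec.2 fun w => by simpa using LinearMap.congr_fun hB w

end Field

section FractionRing

variable {R K n : Type*} [CommRing R] [Field K] [Algebra R K] [IsFractionRing R K]
  [Fintype n] [DecidableEq n] {C : Matrix n n R} {v : n → R}

theorem linearIndependent_pow_mulVec_of_irreducible_charpoly_map
    (hC : Irreducible (C.charpoly.map (algebraMap R K))) (hv : v ≠ 0) :
    LinearIndependent R fun i : Fin (Fintype.card n) => (C ^ (i : ℕ)) *ᵥ v := by
  have hA : Irreducible (C.map (algebraMap R K)).charpoly := by rwa [charpoly_map]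
  have hv' : algebraMap R K ∘ v ≠ 0 := by
    simpa [Function.comp_def, Pi.zero_def] using
      (IsFractionRing.injective R K).comp_left.ne hv
  let ι : (n → R) →ₗ[R] n → K := (Algebra.linearMap R K).compLeft n
  have hcomp : ι ∘ (fun i : Fin (Fintype.card n) => C ^ (i : ℕ) *ᵥ v) =
      fun i : Fin (Fintype.card n) =>
        C.map (algebraMap R K) ^ (i : ℕ) *ᵥ (algebraMap R K ∘ v) := by
    ext i : 1
    rw [← RingHom.mapMatrix_apply, ← map_pow]
    exact (algebraMap R K).comp_mulVec _ _
  refine .of_comp ι ?_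
  rw [LinearIndependent.iff_fractionRing R K, hcomp]
  exact linearIndependent_pow_mulVec hA hv'

theorem eq_zero_of_commute_of_mulVec_eq_zero_of_irreducible_charpoly_map
    (hC : Irreducible (C.charpoly.map (algebraMap R K))) (hv : v ≠ 0)
    {B : Matrix n n R} (hBC : Commute B C) (hBv : B *ᵥ v = 0) : B = 0 := by
  have hA : Irreducible (C.map (algebraMap R K)).charpoly := by rwa [charpoly_map]
  have hv' : algebraMap R K ∘ v ≠ 0 := by
    simpa [Function.comp_def, Pi.zero_def] using
      (IsFractionRing.injective R K).comp_left.ne hv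
  have hBv' : B.map (algebraMap R K) *ᵥ (algebraMap R K ∘ v) = 0 := by
    rw [← RingHom.comp_mulVec, hBv]; ext; simp
  have := eq_zero_of_commute_of_mulVec_eq_zero hA hv' (hBC.map (algebraMap R K).mapMatrix) hBv'
  exact map_injective (IsFractionRing.injective R K) (by simpa using this)

end FractionRing

end Matrix

open Module

/-- If the characteristic polynomial of a `k×k` integer matrix `C` is irreducible
over ℚ, then the additive group `Ξ̄(C)` of integer matrices commuting with `C` is a
free ℤ-module of rank `k`, i.e. isomorphic to `ℤ^k`. -/
theorem commutant_isomorphic_to_Zk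
    (k : ℕ) (C : Matrix (Fin k) (Fin k) ℤ)
    (hirr : Irreducible (C.charpoly.map (Int.castRingHom ℚ))) :
    Nonempty ((commutantZ k C) ≃ₗ[ℤ] (Fin k → ℤ)) := by
  rw [← algebraMap_int_eq] at hirr
  have hk : 0 < k := by
    simpa [← charpoly_map, charpoly_natDegree_eq_dim] using hirr.natDegree_pos
  have hv : (Pi.single ⟨0, hk⟩ 1 : Fin k → ℤ) ≠ 0 := by simp
  let ev : commutantZ k C →ₗ[ℤ] Fin k → ℤ :=
    (mulVecBilin ℤ ℤ).flip (Pi.single ⟨0, hk⟩ 1) ∘ₗ (commutantZ k C).subtype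
  have hev : Function.Injective ev := (injective_iff_map_eq_zero ev).2 fun B hB =>
    Subtype.ext (eq_zero_of_commute_of_mulVec_eq_zero_of_irreducible_charpoly_map hirr hv B.2 hB)
  have hpow : LinearIndependent ℤ fun i : Fin (Fintype.card (Fin k)) =>
      (⟨C ^ (i : ℕ), ((Commute.refl C).pow_left _).eq⟩ : commutantZ k C) :=
    .of_comp ev (linearIndependent_pow_mulVec_of_irreducible_charpoly_map hirr hv)
  have hrank : finrank ℤ (commutantZ k C) = k := le_antisymm
    (by simpa using ev.finrank_le_finrank_of_injective hev)
    (by simpa using hpow.fintype_card_le_finrank)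
  exact ⟨(finBasisOfFinrankEq ℤ _ hrank).equivFun⟩
end

section
/- The 3×3 integer matrix A with rows (1,2,0), (0,1,2), (−7,0,29) has determinant 1 and characteristic polynomial irreducible over ℚ, but A is not of Frobenius type: there do not exist integers a₁, a₂, a₃ and X ∈ SL(3,ℤ) such that X A X⁻¹ commutes with the Frobenius matrix M_{a₁,a₂,a₃}. -/
/-!
A matrix `Y` with `X Y = M X` for a Frobenius matrix `M` forces the rows of `X` to be
`w, wY, wY²` with `w` the first row. If `X A X⁻¹` commutes with `M`, then `Y = X⁻¹ M X` commutes
with `A`, so `Y` lies in the commutant of `A`, which for this `A` is `ℤ + ℤN + ℤD` with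
`N = A - 1`, `D = N²/2`. Then `det X` factors as the index form of the order `ℤ[N, D]` evaluated
at `Y` times a cubic form in `w`. The index form is `2 y₁³` modulo `7`, hence never `±1`:
the order `ℤ[N, D]` has no power basis, so `det X = 1` is impossible.
-/

open Matrix Polynomial

/-- The Frobenius matrix `M_{a₁,a₂,a₃}` with rows `(0,1,0)`, `(0,0,1)`, `(a₃,a₂,a₁)`. -/
def frobeniusMatrix3 (a₁ a₂ a₃ : ℤ) : Matrix (Fin 3) (Fin 3) ℤ :=
  !![0, 1, 0; 0, 0, 1; a₃, a₂, a₁]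

/-- A 3×3 integer matrix `A` is of Frobenius type if there exist integers `a₁, a₂, a₃`
and `X ∈ SL(3,ℤ)` such that `X A X⁻¹` commutes with `M_{a₁,a₂,a₃}`. -/
def IsFrobeniusType3 (A : Matrix (Fin 3) (Fin 3) ℤ) : Prop :=
  ∃ (a₁ a₂ a₃ : ℤ) (X : Matrix.SpecialLinearGroup (Fin 3) ℤ),
    Commute ((X : Matrix (Fin 3) (Fin 3) ℤ) * A * ((X⁻¹ : Matrix.SpecialLinearGroup (Fin 3) ℤ) : Matrix (Fin 3) (Fin 3) ℤ))
      (frobeniusMatrix3 a₁ a₂ a₃)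

theorem Commute.conj_of_mul_eq_one {M : Type*} [Monoid M] {x y a b : M} (hyx : y * x = 1)
    (h : Commute (x * a * y) b) : Commute a (y * b * x) :=
  calc a * (y * b * x) = y * (x * a * y * b) * x := by simp only [← mul_assoc, hyx, one_mul]
    _ = y * (b * (x * a * y)) * x := by rw [h.eq]
    _ = y * b * x * a := by simp only [← mul_assoc, mul_assoc _ y x, hyx, mul_one]

theorem Polynomial.Monic.irreducible_map_rat_of_no_integer_root {p : ℤ[X]} (hp : p.Monic)
    (hdeg : p.natDegree ∈ Finset.Icc 1 3) (hroot : ∀ n : ℤ, n ∣ p.coeff 0 → ¬ p.IsRoot n) :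
    Irreducible (p.map (Int.castRingHom ℚ)) := by
  refine irreducible_of_degree_le_three_of_not_isRoot (by rwa [hp.natDegree_map]) fun r hr => ?_
  obtain ⟨n, rfl, hn⟩ := exists_integer_of_is_root_of_monic (K := ℚ) hp
    (by rwa [aeval_def, eval₂_eq_eval_map])
  exact hroot n hn (hr.of_map (RingHom.injective_int _))

def krylov3 {R : Type*} [Semiring R] (w : Fin 3 → R) (Y : Matrix (Fin 3) (Fin 3) R) :
    Matrix (Fin 3) (Fin 3) R :=
  of ![w, w ᵥ* Y, w ᵥ* Y ᵥ* Y]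

theorem frobeniusMatrix3_mul_apply_zero (a₁ a₂ a₃ : ℤ) (X : Matrix (Fin 3) (Fin 3) ℤ) :
    (frobeniusMatrix3 a₁ a₂ a₃ * X) 0 = X 1 := by
  ext j
  simp [frobeniusMatrix3, mul_apply, Fin.sum_univ_three]

theorem frobeniusMatrix3_mul_apply_one (a₁ a₂ a₃ : ℤ) (X : Matrix (Fin 3) (Fin 3) ℤ) :
    (frobeniusMatrix3 a₁ a₂ a₃ * X) 1 = X 2 := by
  ext j
  simp [frobeniusMatrix3, mul_apply, Fin.sum_univ_three]

theorem krylov3_eq_of_mul_eq_frobeniusMatrix3_mul {a₁ a₂ a₃ : ℤ} {X Y : Matrix (Fin 3) (Fin 3) ℤ}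
    (h : X * Y = frobeniusMatrix3 a₁ a₂ a₃ * X) : krylov3 (X 0) Y = X := by
  have h₁ : X 0 ᵥ* Y = X 1 := by rw [← mul_apply_eq_vecMul, h, frobeniusMatrix3_mul_apply_zero]
  have h₂ : X 1 ᵥ* Y = X 2 := by rw [← mul_apply_eq_vecMul, h, frobeniusMatrix3_mul_apply_one]
  ext i j
  fin_cases i <;> simp [krylov3, h₁, h₂]

theorem IsFrobeniusType3.exists_commute_det_krylov3_eq_one {A : Matrix (Fin 3) (Fin 3) ℤ}
    (hA : IsFrobeniusType3 A) :
    ∃ (w : Fin 3 → ℤ) (Y : Matrix (Fin 3) (Fin 3) ℤ), Commute A Y ∧ (krylov3 w Y).det = 1 := by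
  obtain ⟨a₁, a₂, a₃, X, hX⟩ := hA
  have hinv_mul : ((X⁻¹ : SpecialLinearGroup (Fin 3) ℤ) : Matrix (Fin 3) (Fin 3) ℤ) * X = 1 :=
    congrArg Subtype.val (inv_mul_cancel X)
  have hmul_inv : (X : Matrix (Fin 3) (Fin 3) ℤ) * ((X⁻¹ : SpecialLinearGroup (Fin 3) ℤ) :
      Matrix (Fin 3) (Fin 3) ℤ) = 1 :=
    congrArg Subtype.val (mul_inv_cancel X)
  refine ⟨(X : Matrix (Fin 3) (Fin 3) ℤ) 0, _, hX.conj_of_mul_eq_one hinv_mul, ?_⟩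
  rw [krylov3_eq_of_mul_eq_frobeniusMatrix3_mul (by rw [← mul_assoc, ← mul_assoc, hmul_inv, one_mul])]
  exact X.2

namespace NonFrobeniusExample

abbrev A : Matrix (Fin 3) (Fin 3) ℤ := !![1, 2, 0; 0, 1, 2; -7, 0, 29]

abbrev N : Matrix (Fin 3) (Fin 3) ℤ := !![0, 2, 0; 0, 0, 2; -7, 0, 28]

/-- `D = N² / 2`. -/
abbrev D : Matrix (Fin 3) (Fin 3) ℤ := !![0, 0, 2; -7, 0, 28; -98, -7, 392]

theorem det_A : A.det = 1 := by
  simp [det_fin_three]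

theorem irreducible_charpoly_A : Irreducible (A.charpoly.map (Int.castRingHom ℚ)) := by
  refine A.charpoly_monic.irreducible_map_rat_of_no_integer_root
    (by simp [charpoly_natDegree_eq_dim]) fun n hn => ?_
  have hcoeff : A.charpoly.coeff 0 = -1 := by
    have := det_eq_sign_charpoly_coeff A
    simp only [det_A, Fintype.card_fin] at this
    linarith
  rw [hcoeff, dvd_neg] at hn
  rw [IsRoot, eval_charpoly]
  rcases Int.isUnit_iff.mp (isUnit_of_dvd_one hn) with rfl | rfl <;> simp [det_fin_three]

theorem exists_eq_of_commute_A {Y : Matrix (Fin 3) (Fin 3) ℤ} (h : Commute A Y) :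
    ∃ y₀ y₁ y₂ : ℤ, Y = y₀ • 1 + y₁ • N + y₂ • D := by
  have e : ∀ i j, (A * Y) i j = (Y * A) i j := fun i j => by rw [h.eq]
  simp only [Fin.forall_fin_succ, Fin.succ_zero_eq_one, Fin.succ_one_eq_two, IsEmpty.forall_iff,
    and_true, mul_apply, Fin.sum_univ_three, of_apply, cons_val_zero, cons_val_one, cons_val] at e
  obtain ⟨y₁, hy₁⟩ : 2 ∣ Y 0 1 := by omega
  obtain ⟨y₂, hy₂⟩ : 2 ∣ Y 0 2 := by omega
  refine ⟨Y 0 0, y₁, y₂, ?_⟩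
  rw [one_fin_three]
  ext i j
  fin_cases i <;> fin_cases j <;> simp <;> omega

/-- The index of `ℤ[y₀ + y₁ N + y₂ D]` in the order `ℤ + ℤN + ℤD`. -/
def indexForm (y₁ y₂ : ℤ) : ℤ :=
  2 * y₁ ^ 3 + 56 * y₁ ^ 2 * y₂ + 392 * y₁ * y₂ ^ 2 + 7 * y₂ ^ 3

theorem det_krylov3 (w : Fin 3 → ℤ) (y₀ y₁ y₂ : ℤ) :
    (krylov3 w (y₀ • 1 + y₁ • N + y₂ • D)).det =
      indexForm y₁ y₂ * (of ![w, w ᵥ* N, w ᵥ* D]).det := by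
  have hY : y₀ • 1 + y₁ • N + y₂ • D = !![y₀, 2 * y₁, 2 * y₂; -7 * y₂, y₀, 2 * y₁ + 28 * y₂;
      -7 * y₁ - 98 * y₂, -7 * y₂, y₀ + 28 * y₁ + 392 * y₂] := by
    rw [one_fin_three]
    ext i j
    fin_cases i <;> fin_cases j <;> simp <;> ring
  rw [hY]
  simp only [krylov3, det_fin_three, indexForm, of_apply, vecMul_cons, empty_vecMul, smul_cons,
    smul_empty, add_cons, empty_add_empty, vecHead, vecTail, Function.comp_apply, Fin.succ_zero_eq_one,
    Fin.succ_one_eq_two, cons_val', cons_val_fin_one, cons_val_zero, cons_val_one, cons_val,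
    Int.zsmul_eq_mul, add_zero]
  ring

theorem not_isUnit_indexForm (y₁ y₂ : ℤ) : ¬ IsUnit (indexForm y₁ y₂) := by
  -- modulo 7 the form is `2 y₁³`, and cubes modulo 7 are `0, ±1`
  have hmod : ∀ a b : ZMod 7, 2 * a ^ 3 + 56 * a ^ 2 * b + 392 * a * b ^ 2 + 7 * b ^ 3 ≠ 1 ∧
      2 * a ^ 3 + 56 * a ^ 2 * b + 392 * a * b ^ 2 + 7 * b ^ 3 ≠ -1 := by decide
  rw [Int.isUnit_iff]
  rintro (h | h) <;> have h₇ := congrArg (Int.cast : ℤ → ZMod 7) h <;>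
    push_cast [indexForm] at h₇
  · exact (hmod _ _).1 h₇
  · exact (hmod _ _).2 h₇

theorem not_isFrobeniusType3_A : ¬ IsFrobeniusType3 A := by
  intro hA
  obtain ⟨w, Y, hY, hdet⟩ := hA.exists_commute_det_krylov3_eq_one
  obtain ⟨y₀, y₁, y₂, rfl⟩ := exists_eq_of_commute_A hY
  rw [det_krylov3] at hdet
  exact not_isUnit_indexForm y₁ y₂ (.of_mul_eq_one _ hdet)

end NonFrobeniusExample

/-- The matrix with rows `(1,2,0)`, `(0,1,2)`, `(−7,0,29)` has determinant one and
irreducible characteristic polynomial over ℚ, but is not of Frobenius type. -/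
theorem example_non_frobenius_matrix :
    (!![1, 2, 0; 0, 1, 2; -7, 0, 29] : Matrix (Fin 3) (Fin 3) ℤ).det = 1 ∧
    Irreducible ((!![1, 2, 0; 0, 1, 2; -7, 0, 29] : Matrix (Fin 3) (Fin 3) ℤ).charpoly.map
      (Int.castRingHom ℚ)) ∧
    ¬ IsFrobeniusType3 (!![1, 2, 0; 0, 1, 2; -7, 0, 29] : Matrix (Fin 3) (Fin 3) ℤ) :=
  ⟨NonFrobeniusExample.det_A, NonFrobeniusExample.irreducible_charpoly_A,
    NonFrobeniusExample.not_isFrobeniusType3_A⟩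
end

section
/- For the matrix A with rows (1,2,0), (0,1,2), (−7,0,29), the matrix B = (A² − 30A + 29E)/2 has integer entries, and {E, A, B} is a ℤ-basis of the additive group Ξ̄(A) of all 3×3 integer matrices commuting with A. -/
/-!
`2B` is a polynomial in `A`, and integer matrices are torsion-free, so `B` commutes with `A`.
The entries `(1,2)`, `(2,1)`, `(2,2)` of `c₁E + c₂A + c₃B` are `2c₂`, `-7c₃`, `c₁ + 29c₂`, so the
coordinates are unique. Conversely the nine linear equations `DA = AD` force `2 ∣ D₁₂` and
`7 ∣ D₂₁` and express every entry of `D` through `D₁₂`, `D₂₁`, `D₂₂`, which gives existence.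
-/

theorem Commute.of_smul_left {R M : Type*} [Semiring R] [NonUnitalNonAssocSemiring M] [Module R M]
    [IsScalarTower R M M] [SMulCommClass R M M] [Module.IsTorsionFree R M] {r : R}
    (hr : IsRegular r) {a b : M} (h : Commute (r • a) b) : Commute a b :=
  hr.smul_right_injective M <| by
    simpa only [smul_mul_assoc, mul_smul_comm] using h.eq

namespace CommutantExample

def A : Matrix (Fin 3) (Fin 3) ℤ := !![1, 2, 0; 0, 1, 2; -7, 0, 29]

def B : Matrix (Fin 3) (Fin 3) ℤ := !![0, -28, 2; -7, 0, 0; 0, -7, 0]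

def linComb (c : ℤ × ℤ × ℤ) : Matrix (Fin 3) (Fin 3) ℤ := c.1 • 1 + c.2.1 • A + c.2.2 • B

def coords (D : Matrix (Fin 3) (Fin 3) ℤ) : ℤ × ℤ × ℤ :=
  (D 2 2 - 29 * (D 1 2 / 2), D 1 2 / 2, -(D 2 1 / 7))

theorem two_smul_B : (2 : ℤ) • B = A ^ 2 - (30 : ℤ) • A + (29 : ℤ) • 1 := by
  simp [A, B, sq, Matrix.one_fin_three]

theorem commute_B_A : Commute B A := by
  refine .of_smul_left (r := (2 : ℤ)) (.of_ne_zero two_ne_zero) ?_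
  rw [two_smul_B]
  exact (((Commute.refl A).pow_left 2).sub_left ((Commute.refl A).smul_left 30)).add_left
    ((Commute.one_left A).smul_left 29)

theorem coords_linComb (c : ℤ × ℤ × ℤ) : coords (linComb c) = c := by
  simp [coords, linComb, A, B, Matrix.one_fin_three, Int.neg_ediv_of_dvd, mul_comm]

theorem linComb_coords_of_mul_comm {D : Matrix (Fin 3) (Fin 3) ℤ} (hD : D * A = A * D) :
    linComb (coords D) = D := by
  rw [Matrix.eta_fin_three D, A, Matrix.mul_fin_three, Matrix.mul_fin_three] at hD
  simp only [EmbeddingLike.apply_eq_iff_eq, Matrix.vecCons_inj, and_true] at hD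
  ext i j
  fin_cases i <;> fin_cases j <;> simp [linComb, coords, A, B, Matrix.one_fin_three] <;> omega

end CommutantExample

/-- For `A = !![1,2,0; 0,1,2; -7,0,29]`, there is an integer matrix `B` equal to
`(A² − 30A + 29E)/2` (i.e. `2B = A² − 30A + 29E`), and `{E, A, B}` is a ℤ-basis of the
additive group `Ξ̄(A)` of all 3×3 integer matrices commuting with `A`. -/
theorem basis_of_commutant_of_example_matrix :
    ∃ B : Matrix (Fin 3) (Fin 3) ℤ,
      (2 : ℤ) • B
        = (!![1, 2, 0; 0, 1, 2; -7, 0, 29] : Matrix (Fin 3) (Fin 3) ℤ) ^ 2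
          - (30 : ℤ) • (!![1, 2, 0; 0, 1, 2; -7, 0, 29] : Matrix (Fin 3) (Fin 3) ℤ)
          + (29 : ℤ) • (1 : Matrix (Fin 3) (Fin 3) ℤ) ∧
      B * !![1, 2, 0; 0, 1, 2; -7, 0, 29] = !![1, 2, 0; 0, 1, 2; -7, 0, 29] * B ∧
      ∀ D : Matrix (Fin 3) (Fin 3) ℤ,
        D * !![1, 2, 0; 0, 1, 2; -7, 0, 29] = !![1, 2, 0; 0, 1, 2; -7, 0, 29] * D →
        ∃! c : ℤ × ℤ × ℤ,
          D = c.1 • (1 : Matrix (Fin 3) (Fin 3) ℤ)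
            + c.2.1 • (!![1, 2, 0; 0, 1, 2; -7, 0, 29] : Matrix (Fin 3) (Fin 3) ℤ)
            + c.2.2 • B := by
  refine ⟨CommutantExample.B, CommutantExample.two_smul_B, CommutantExample.commute_B_A.eq,
    fun D hD => ⟨CommutantExample.coords D,
      (CommutantExample.linComb_coords_of_mul_comm hD).symm, ?_⟩⟩
  rintro c rfl
  exact (CommutantExample.coords_linComb c).symm
end

section
/- There is no 3×3 integer matrix with characteristic polynomial irreducible over ℚ whose norm (the sum of the absolute values of all nine entries) is less than or equal to three. -/
/-!
If `det A = 0`, then `0` is an eigenvalue. Otherwise some term `∏ i, A i (σ i)` of the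
determinant is nonzero, and since its three factors are nonzero integers the bound on the norm
forces `A` to be a signed permutation matrix. If `σ` fixes `k`, row `k` of `A` is `A k k • eₖ`,
so `A k k = ±1` is an eigenvalue; otherwise `σ` is a `3`-cycle and the characteristic polynomial
is `X ^ 3 - s` with `s = ±1` the product of the nonzero entries. Either way the characteristic
polynomial, of degree `3`, has a rational root.
-/

/-- The norm of an integer matrix: the sum of the absolute values of all its entries. -/
def matNorm3 (A : Matrix (Fin 3) (Fin 3) ℤ) : ℤ := ∑ i, ∑ j, |A i j|

open Polynomial Finset Equiv

theorem Int.abs_eq_one_and_eq_zero_of_sum_abs_le_one {ι : Type*} [Fintype ι] [DecidableEq ι]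
    {v : ι → ℤ} (hv : ∑ j, |v j| ≤ 1) {k : ι} (hk : v k ≠ 0) :
    |v k| = 1 ∧ ∀ j ≠ k, v j = 0 := by
  rw [← add_sum_erase _ _ (mem_univ k)] at hv
  have hrest : 0 ≤ ∑ j ∈ univ.erase k, |v j| := sum_nonneg fun j _ ↦ abs_nonneg _
  have hk1 : 1 ≤ |v k| := Int.one_le_abs hk
  refine ⟨by omega, fun j hj ↦ abs_eq_zero.mp ?_⟩
  exact (sum_eq_zero_iff_of_nonneg fun j _ ↦ abs_nonneg (v j)).mp (by omega) j
    (mem_erase.mpr ⟨hj, mem_univ j⟩)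

theorem Equiv.Perm.fin_three_apply_of_forall_ne :
    ∀ σ : Perm (Fin 3), (∀ k, σ k ≠ k) →
      σ 0 = 1 ∧ σ 1 = 2 ∧ σ 2 = 0 ∨ σ 0 = 2 ∧ σ 1 = 0 ∧ σ 2 = 1 := by
  decide

namespace Matrix

variable {n R : Type*} [Fintype n] [DecidableEq n] [CommRing R]

theorem not_irreducible_map_charpoly_of_isRoot {K : Type*} [Field K] (f : R →+* K)
    (A : Matrix n n R) (hn : Fintype.card n ≠ 1) (hroot : ∃ r, A.charpoly.IsRoot r) :
    ¬ Irreducible (A.charpoly.map f) := by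
  intro hirr
  obtain ⟨r, hr⟩ := hroot
  have := f.domain_nontrivial
  have hdeg := degree_eq_one_of_irreducible_of_root hirr (hr.map (f := f))
  rw [degree_eq_natDegree hirr.ne_zero, A.charpoly_monic.natDegree_map,
    charpoly_natDegree_eq_dim] at hdeg
  exact hn (by exact_mod_cast hdeg)

theorem isRoot_charpoly_zero_of_det_eq_zero {A : Matrix n n R} (h : A.det = 0) :
    A.charpoly.IsRoot 0 := by
  rw [IsRoot, eval_charpoly, map_zero, zero_sub, det_neg, h, mul_zero]

theorem isRoot_charpoly_diag_of_row_eq_zero {A : Matrix n n R} {k : n}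
    (h : ∀ j ≠ k, A k j = 0) : A.charpoly.IsRoot (A k k) := by
  rw [IsRoot, eval_charpoly]
  refine det_eq_zero_of_row_eq_zero k fun j ↦ ?_
  by_cases hj : j = k
  · simp [hj]
  · simp [Ne.symm hj, h j hj]

theorem exists_perm_apply_ne_zero_of_det_ne_zero {A : Matrix n n R} (h : A.det ≠ 0) :
    ∃ σ : Perm n, ∀ i, A i (σ i) ≠ 0 := by
  rw [← det_transpose, det_apply'] at h
  obtain ⟨σ, -, hσ⟩ := exists_ne_zero_of_sum_ne_zero h
  refine ⟨σ, fun i hi ↦ hσ ?_⟩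
  rw [prod_eq_zero (mem_univ i) hi, mul_zero]

theorem exists_perm_of_det_ne_zero_of_sum_abs_le {A : Matrix n n ℤ} (hA : A.det ≠ 0)
    (hnorm : ∑ i, ∑ j, |A i j| ≤ Fintype.card n) :
    ∃ σ : Perm n, ∀ i, |A i (σ i)| = 1 ∧ ∀ j ≠ σ i, A i j = 0 := by
  obtain ⟨σ, hσ⟩ := exists_perm_apply_ne_zero_of_det_ne_zero hA
  have hrow : ∀ i, 1 ≤ ∑ j, |A i j| := fun i ↦
    (Int.one_le_abs (hσ i)).trans (single_le_sum (fun j _ ↦ abs_nonneg (A i j)) (mem_univ _))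
  have hrow_eq : ∀ i, 1 = ∑ j, |A i j| := by
    have hsum : ∑ _i : n, (1 : ℤ) = ∑ i, ∑ j, |A i j| :=
      le_antisymm (sum_le_sum fun i _ ↦ hrow i) (by simpa using hnorm)
    exact fun i ↦ (sum_eq_sum_iff_of_le fun i _ ↦ hrow i).mp hsum i (mem_univ i)
  exact ⟨σ, fun i ↦ Int.abs_eq_one_and_eq_zero_of_sum_abs_le_one (hrow_eq i).ge (hσ i)⟩

theorem isRoot_charpoly_prod_of_forall_ne {A : Matrix (Fin 3) (Fin 3) R}
    {σ : Perm (Fin 3)} (hσ : ∀ k, σ k ≠ k) (h1 : ∀ i, A i (σ i) ^ 2 = 1)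
    (h0 : ∀ i, ∀ j ≠ σ i, A i j = 0) :
    A.charpoly.IsRoot (∏ i, A i (σ i)) := by
  have cube_self : ∀ a b c : R, a ^ 2 = 1 → b ^ 2 = 1 → c ^ 2 = 1 →
      a * b * c * (a * b * c) * (a * b * c) + -(a * b * c) = 0 := fun a b c ha hb hc ↦ by
    linear_combination (a * b * c) * (b ^ 2 * c ^ 2 * ha + c ^ 2 * hb + hc)
  rw [IsRoot, eval_charpoly, det_fin_three, Fin.prod_univ_three]
  rcases σ.fin_three_apply_of_forall_ne hσ with ⟨e0, e1, e2⟩ | ⟨e0, e1, e2⟩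
  all_goals
    have h10 := h1 0; have h11 := h1 1; have h12 := h1 2
    simp only [e0, e1, e2] at h10 h11 h12
    simpa +decide [h0, e0, e1, e2, scalar_apply] using cube_self _ _ _ h10 h11 h12

end Matrix

open Matrix

/-- There is no 3×3 integer matrix with characteristic polynomial irreducible over ℚ
whose norm is at most three. -/
theorem no_irreducible_matrix_of_norm_le_three
    (A : Matrix (Fin 3) (Fin 3) ℤ) (hnorm : matNorm3 A ≤ 3) :
    ¬ Irreducible (A.charpoly.map (Int.castRingHom ℚ)) := by
  refine not_irreducible_map_charpoly_of_isRoot _ A (by simp) ?_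
  by_cases hdet : A.det = 0
  · exact ⟨0, isRoot_charpoly_zero_of_det_eq_zero hdet⟩
  obtain ⟨σ, hσ⟩ :=
    exists_perm_of_det_ne_zero_of_sum_abs_le hdet (by simpa [matNorm3] using hnorm)
  by_cases hfix : ∃ k, σ k = k
  · obtain ⟨k, hk⟩ := hfix
    exact ⟨A k k, isRoot_charpoly_diag_of_row_eq_zero fun j hj ↦ (hσ k).2 j (hk.symm ▸ hj)⟩
  · refine ⟨_, isRoot_charpoly_prod_of_forall_ne (not_exists.mp hfix) (fun i ↦ ?_)
      fun i ↦ (hσ i).2⟩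
    rw [← sq_abs, (hσ i).1, one_pow]
end

section
/- The number of 3×3 integer matrices with characteristic polynomial irreducible over ℚ and norm (sum of absolute values of all nine entries) equal to four is exactly 240. -/
open Polynomial

section TuplesOfWeight

variable {α : Type*} (shell : ℕ → List α)

/-- The tuples `v : Fin n → α` whose weights `w (v i)` add up to `b`, when `shell k` lists the
elements of `α` of weight `k`. -/
def tuplesOfWeight : (n : ℕ) → ℕ → List (Fin n → α)
  | 0, b => if b = 0 then [Fin.elim0] else []
  | n + 1, b => (List.range (b + 1)).flatMap fun k =>
      (shell k).flatMap fun x => (tuplesOfWeight n (b - k)).map (Fin.cons x)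

variable {shell} {w : α → ℕ} (hshell : ∀ k x, x ∈ shell k ↔ w x = k)
include hshell

theorem mem_tuplesOfWeight {n b : ℕ} {v : Fin n → α} :
    v ∈ tuplesOfWeight shell n b ↔ ∑ i, w (v i) = b := by
  induction n generalizing b with
  | zero =>
    by_cases hb : b = 0 <;> simp [tuplesOfWeight, hb, eq_comm, Subsingleton.elim v Fin.elim0]
  | succ n ih =>
    simp only [tuplesOfWeight, List.mem_flatMap, List.mem_range, List.mem_map, ih, hshell,
      Fin.sum_univ_succ]
    constructor
    · rintro ⟨k, hk, x, rfl, t, ht, rfl⟩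
      simp only [Fin.cons_zero, Fin.cons_succ]
      omega
    · intro hv
      have htail : ∑ i, w (Fin.tail v i) = b - w (v 0) := by simp only [Fin.tail]; omega
      exact ⟨w (v 0), by omega, v 0, rfl, Fin.tail v, htail, Fin.cons_self_tail v⟩

theorem nodup_tuplesOfWeight (hnodup : ∀ k, (shell k).Nodup) (n b : ℕ) :
    (tuplesOfWeight shell n b).Nodup := by
  induction n generalizing b with
  | zero => by_cases hb : b = 0 <;> simp [tuplesOfWeight, hb]
  | succ n ih =>
    have head_eq {x y : α} {t t' : Fin n → α}
        (h : (Fin.cons x t : Fin (n + 1) → α) = Fin.cons y t') : x = y := by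
      simpa using congrFun h 0
    refine List.nodup_flatMap.2 ⟨fun k _ => List.nodup_flatMap.2 ⟨fun x _ => ?_, ?_⟩, ?_⟩
    · exact (ih _).map (Fin.cons_right_injective (α := fun _ => α) x)
    · refine (hnodup k).imp fun {x y} hxy => ?_
      simp only [Function.onFun, List.disjoint_left, List.mem_map]
      rintro _ ⟨t, -, rfl⟩ ⟨t', -, h⟩
      exact hxy (head_eq h).symm
    · refine List.nodup_range.imp fun {k l} hkl => ?_
      simp only [Function.onFun, List.disjoint_left, List.mem_flatMap, List.mem_map, hshell]
      rintro _ ⟨x, rfl, t, -, rfl⟩ ⟨y, rfl, t', -, h⟩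
      exact hkl (congrArg w (head_eq h)).symm

end TuplesOfWeight

def intShell (k : ℕ) : List ℤ := if k = 0 then [0] else [k, -k]

theorem mem_intShell (k : ℕ) (z : ℤ) : z ∈ intShell k ↔ z.natAbs = k := by
  unfold intShell
  split_ifs <;> simp [*]; omega

theorem nodup_intShell (k : ℕ) : (intShell k).Nodup := by
  unfold intShell
  split_ifs
  · simp
  · simp; omega

theorem mem_tuplesOfWeight_intShell {n b : ℕ} {v : Fin n → ℤ} :
    v ∈ tuplesOfWeight intShell n b ↔ ∑ i, (v i).natAbs = b :=
  mem_tuplesOfWeight mem_intShell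

def matricesOfNorm (m n b : ℕ) : Finset (Matrix (Fin m) (Fin n) ℤ) :=
  ⟨Multiset.ofList (tuplesOfWeight (tuplesOfWeight intShell n) m b),
    Multiset.coe_nodup.2 <| nodup_tuplesOfWeight (fun _ _ => mem_tuplesOfWeight_intShell)
      (nodup_tuplesOfWeight mem_intShell nodup_intShell n) m b⟩

theorem mem_matricesOfNorm {m n b : ℕ} {A : Matrix (Fin m) (Fin n) ℤ} :
    A ∈ matricesOfNorm m n b ↔ ∑ i, ∑ j, |A i j| = b := by
  refine Multiset.mem_coe.trans <|
    (mem_tuplesOfWeight fun _ _ => mem_tuplesOfWeight_intShell).trans ?_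
  simp only [Int.abs_eq_natAbs]
  norm_cast

theorem Polynomial.Monic.irreducible_map_iff_forall_not_isRoot {R K : Type*} [CommRing R]
    [IsDomain R] [IsIntegrallyClosed R] [Field K] [Algebra R K] [IsFractionRing R K] {p : R[X]}
    (hp : p.Monic) (hp2 : 2 ≤ p.natDegree) (hp3 : p.natDegree ≤ 3) :
    Irreducible (p.map (algebraMap R K)) ↔ ∀ r : R, ¬ p.IsRoot r := by
  have hpK := hp.map (algebraMap R K)
  rw [hpK.irreducible_iff_roots_eq_zero_of_degree_le_three (by rwa [hp.natDegree_map])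
    (by rwa [hp.natDegree_map]), Multiset.eq_zero_iff_forall_notMem]
  simp only [mem_roots hpK.ne_zero, IsRoot.def, eval_map_algebraMap]
  constructor
  · intro h r hr
    exact h (algebraMap R K r) (by rw [aeval_algebraMap_apply, coe_aeval_eq_eval, hr, map_zero])
  · intro h x hx
    have hx_int : IsIntegral R x := ⟨p, hp, by rwa [← aeval_def]⟩
    obtain ⟨r, rfl⟩ := IsIntegrallyClosed.isIntegral_iff.mp hx_int
    rw [aeval_algebraMap_apply, map_eq_zero_iff _ (IsFractionRing.injective R K),
      coe_aeval_eq_eval] at hx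
    exact h r hx

theorem Polynomial.forall_not_isRoot_iff_forall_mem_Icc (p : ℤ[X]) :
    (∀ z : ℤ, ¬ p.IsRoot z) ↔ ∀ z ∈ Finset.Icc (-|p.coeff 0|) |p.coeff 0|, ¬ p.IsRoot z := by
  refine ⟨fun h z _ => h z, fun h z hz => ?_⟩
  by_cases h0 : p.coeff 0 = 0
  · exact h 0 (by simp) (zero_isRoot_of_coeff_zero_eq_zero h0)
  · have hz_le : |z| ≤ |p.coeff 0| :=
      Int.le_of_dvd (abs_pos.2 h0) ((abs_dvd_abs _ _).2 hz.dvd_coeff_zero)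
    exact h z (Finset.mem_Icc.2 (abs_le.1 hz_le)) hz

/-- `det (z • 1 - A)` expanded along the first row: unlike `Matrix.det`, a sum over all
permutations, the kernel evaluates it quickly. -/
def evalCharpolyFinThree {R : Type*} [CommRing R] (A : Matrix (Fin 3) (Fin 3) R) (z : R) : R :=
  (z - A 0 0) * ((z - A 1 1) * (z - A 2 2) - A 1 2 * A 2 1)
    - A 0 1 * (A 1 0 * (z - A 2 2) + A 1 2 * A 2 0)
    - A 0 2 * (A 1 0 * A 2 1 + (z - A 1 1) * A 2 0)

theorem Matrix.eval_charpoly_fin_three {R : Type*} [CommRing R] (A : Matrix (Fin 3) (Fin 3) R)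
    (z : R) : A.charpoly.eval z = evalCharpolyFinThree A z := by
  rw [eval_charpoly, det_fin_three, evalCharpolyFinThree]
  simp only [sub_apply, scalar_apply, diagonal_apply_eq, diagonal_apply_ne, ne_eq, Fin.reduceEq,
    not_false_eq_true, zero_sub]
  ring

theorem Matrix.irreducible_charpoly_map_iff (A : Matrix (Fin 3) (Fin 3) ℤ) :
    Irreducible (A.charpoly.map (Int.castRingHom ℚ)) ↔
      ∀ z ∈ Finset.Icc (-|evalCharpolyFinThree A 0|) |evalCharpolyFinThree A 0|,
        evalCharpolyFinThree A z ≠ 0 := by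
  have hdeg : A.charpoly.natDegree = 3 := by simp [charpoly_natDegree_eq_dim]
  rw [← algebraMap_int_eq, A.charpoly_monic.irreducible_map_iff_forall_not_isRoot (by omega)
    (by omega), forall_not_isRoot_iff_forall_mem_Icc, coeff_zero_eq_eval_zero]
  simp only [IsRoot.def, eval_charpoly_fin_three]

/-- The number of 3×3 integer matrices with characteristic polynomial irreducible over ℚ
and norm equal to 4 is exactly 240. -/
theorem count_irreducible_matrices_of_norm_4 :
    {A : Matrix (Fin 3) (Fin 3) ℤ |
      Irreducible (A.charpoly.map (Int.castRingHom ℚ)) ∧ matNorm3 A = 4}.ncard = 240 := by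
  calc _ = ((matricesOfNorm 3 3 4).filter fun A : Matrix (Fin 3) (Fin 3) ℤ =>
          ∀ z ∈ Finset.Icc (-|evalCharpolyFinThree A 0|) |evalCharpolyFinThree A 0|,
            evalCharpolyFinThree A z ≠ 0).card := by
        rw [← Set.ncard_coe_finset]
        congr 1
        ext A
        simp [mem_matricesOfNorm, Matrix.irreducible_charpoly_map_iff, matNorm3, and_comm]
    _ = 240 := by decide +kernel
end

section
/- Every hyperbolic matrix in M(3,ℤ) (i.e., every 3×3 integer matrix with irreducible characteristic polynomial over ℚ all of whose eigenvalues are real and distinct) has norm at least five, and there exists such a matrix of norm exactly five. -/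
/-!
If `A` has norm at most `4`, its entries range over a finite set of a few thousand matrices, and
a direct computation shows that for each of them either the discriminant of the characteristic
cubic is nonpositive, so its roots are not three distinct reals, or the cubic has an integer
root, so it is reducible over `ℚ`. The bound is attained by a matrix whose characteristic
polynomial `X ^ 3 + X ^ 2 - 2 X - 1` has no integer root (hence is irreducible over `ℚ` by
Gauss's lemma) and changes sign on `(-2, -1)`, `(-1, 0)` and `(1, 2)`.
-/

open Polynomial

/-- A 3×3 integer matrix is hyperbolic if its characteristic polynomial has three
distinct real roots. -/
def IsHyperbolic3 (A : Matrix (Fin 3) (Fin 3) ℤ) : Prop :=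
  ∃ r₁ r₂ r₃ : ℝ, r₁ ≠ r₂ ∧ r₁ ≠ r₃ ∧ r₂ ≠ r₃ ∧
    A.charpoly.map (Int.castRingHom ℝ)
      = (Polynomial.X - Polynomial.C r₁) * (Polynomial.X - Polynomial.C r₂)
        * (Polynomial.X - Polynomial.C r₃)

namespace Cubic

variable {R S : Type*}

theorem eval_toPoly [CommSemiring R] (P : Cubic R) (x : R) :
    P.toPoly.eval x = P.a * x ^ 3 + P.b * x ^ 2 + P.c * x + P.d := by
  simp only [toPoly, eval_add, eval_mul, eval_C, eval_pow, eval_X]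

theorem map_discr [Ring R] [Ring S] (φ : R →+* S) (P : Cubic R) :
    (P.map φ).discr = φ P.discr := by
  simp only [map, discr, map_add, map_sub, map_mul, map_pow, map_ofNat]

theorem discr_pos_of_toPoly_eq_prod_X_sub_C [CommRing R] [LinearOrder R] [IsStrictOrderedRing R]
    {P : Cubic R} {x y z : R} (hxy : x ≠ y) (hxz : x ≠ z) (hyz : y ≠ z)
    (h : P.toPoly = (X - C x) * (X - C y) * (X - C z)) : 0 < P.discr := by
  rw [prod_X_sub_C_eq, toPoly_injective] at h
  calc 0 < ((x - y) * (x - z) * (y - z)) ^ 2 := by positivity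
    _ = P.discr := by subst h; simp only [discr]; ring

end Cubic

theorem Polynomial.Monic.eq_prod_X_sub_C_of_isRoot {R : Type*} [CommRing R] [IsDomain R]
    {p : R[X]} (hp : p.Monic) (hdeg : p.natDegree = 3) {x y z : R}
    (hxy : x ≠ y) (hxz : x ≠ z) (hyz : y ≠ z) (hx : p.IsRoot x) (hy : p.IsRoot y)
    (hz : p.IsRoot z) : p = (X - C x) * (X - C y) * (X - C z) := by
  have hroots : ({x, y, z} : Multiset R) ≤ p.roots := by
    rw [Multiset.le_iff_subset (by simp [hxy, hxz, hyz])]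
    simpa [Multiset.subset_iff, mem_roots hp.ne_zero] using ⟨hx, hy, hz⟩
  have hdvd := (Multiset.prod_X_sub_C_dvd_iff_le_roots hp.ne_zero _).2 hroots
  simp only [Multiset.insert_eq_cons, Multiset.map_cons, Multiset.map_singleton,
    Multiset.prod_cons, Multiset.prod_singleton, ← mul_assoc] at hdvd
  have hxy_monic := (monic_X_sub_C x).mul (monic_X_sub_C y)
  refine eq_of_monic_of_dvd_of_natDegree_le (hxy_monic.mul (monic_X_sub_C z)) hp hdvd ?_
  rw [hdeg, natDegree_mul hxy_monic (monic_X_sub_C z),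
    natDegree_mul (monic_X_sub_C x) (monic_X_sub_C y)]
  simp

namespace Matrix

variable {R : Type*} [CommRing R]

theorem not_isRoot_charpoly_of_irreducible_map [Nontrivial R] {n : Type*} [Fintype n]
    [DecidableEq n] {K : Type*} [Field K] (f : R →+* K) (A : Matrix n n R)
    (hA : Irreducible (A.charpoly.map f)) (hn : Fintype.card n ≠ 1) (r : R) :
    ¬ A.charpoly.IsRoot r := fun hr ↦ hn <| by
  have := degree_eq_one_of_irreducible_of_root hA (hr.map (f := f))
  rwa [degree_eq_natDegree hA.ne_zero, A.charpoly_monic.natDegree_map,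
    charpoly_natDegree_eq_dim, Nat.cast_eq_one] at this

/-- Written out in the entries, rather than through `trace` and `det`, so that `decide` can
evaluate it. -/
def charCubic (A : Matrix (Fin 3) (Fin 3) R) : Cubic R :=
  ⟨1, -(A 0 0 + A 1 1 + A 2 2),
    A 0 0 * A 1 1 - A 0 1 * A 1 0 + A 0 0 * A 2 2 - A 0 2 * A 2 0 + A 1 1 * A 2 2 - A 1 2 * A 2 1,
    -(A 0 0 * A 1 1 * A 2 2 - A 0 0 * A 1 2 * A 2 1 - A 0 1 * A 1 0 * A 2 2
      + A 0 1 * A 1 2 * A 2 0 + A 0 2 * A 1 0 * A 2 1 - A 0 2 * A 1 1 * A 2 0)⟩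

theorem toPoly_charCubic (A : Matrix (Fin 3) (Fin 3) R) : A.charCubic.toPoly = A.charpoly := by
  rw [charpoly, det_fin_three]
  simp only [charmatrix_apply, diagonal_apply, Fin.reduceEq, if_true, if_false,
    Cubic.toPoly, charCubic, map_add, map_sub, map_mul, map_neg, map_one]
  ring

theorem charCubic_discr_pos_of_isHyperbolic3 {A : Matrix (Fin 3) (Fin 3) ℤ}
    (hA : IsHyperbolic3 A) : 0 < A.charCubic.discr := by
  obtain ⟨r₁, r₂, r₃, h₁₂, h₁₃, h₂₃, hfac⟩ := hA
  have := (A.charCubic.map (Int.castRingHom ℝ)).discr_pos_of_toPoly_eq_prod_X_sub_C h₁₂ h₁₃ h₂₃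
    (by rw [Cubic.map_toPoly, toPoly_charCubic, hfac])
  rw [Cubic.map_discr, eq_intCast] at this
  exact_mod_cast this

set_option maxHeartbeats 4000000 in
theorem charCubic_discr_nonpos_or_exists_root_of_small_entries :
    ∀ a ∈ Finset.Icc (-4 : ℤ) 4, ∀ b ∈ Finset.Icc (-(4 - |a|)) (4 - |a|),
    ∀ c ∈ Finset.Icc (-(4 - |a| - |b|)) (4 - |a| - |b|),
    ∀ d ∈ Finset.Icc (-(4 - |a| - |b| - |c|)) (4 - |a| - |b| - |c|),
    ∀ e ∈ Finset.Icc (-(4 - |a| - |b| - |c| - |d|)) (4 - |a| - |b| - |c| - |d|),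
    ∀ f ∈ Finset.Icc (-(4 - |a| - |b| - |c| - |d| - |e|)) (4 - |a| - |b| - |c| - |d| - |e|),
    ∀ g ∈ Finset.Icc (-(4 - |a| - |b| - |c| - |d| - |e| - |f|))
      (4 - |a| - |b| - |c| - |d| - |e| - |f|),
    ∀ h ∈ Finset.Icc (-(4 - |a| - |b| - |c| - |d| - |e| - |f| - |g|))
      (4 - |a| - |b| - |c| - |d| - |e| - |f| - |g|),
    ∀ i ∈ Finset.Icc (-(4 - |a| - |b| - |c| - |d| - |e| - |f| - |g| - |h|))
      (4 - |a| - |b| - |c| - |d| - |e| - |f| - |g| - |h|),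
    let P := !![a, b, c; d, e, f; g, h, i].charCubic
    P.discr ≤ 0 ∨ ∃ r ∈ Finset.Icc (-4 : ℤ) 4, P.a * r ^ 3 + P.b * r ^ 2 + P.c * r + P.d = 0 := by
  decide +kernel

theorem charCubic_discr_nonpos_or_exists_root_of_matNorm3_le_four
    (A : Matrix (Fin 3) (Fin 3) ℤ) (hA : matNorm3 A ≤ 4) :
    A.charCubic.discr ≤ 0 ∨ ∃ r : ℤ, A.charpoly.IsRoot r := by
  simp only [matNorm3, Fin.sum_univ_three] at hA
  have := abs_nonneg (A 0 0); have := abs_nonneg (A 0 1); have := abs_nonneg (A 0 2)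
  have := abs_nonneg (A 1 0); have := abs_nonneg (A 1 1); have := abs_nonneg (A 1 2)
  have := abs_nonneg (A 2 0); have := abs_nonneg (A 2 1); have := abs_nonneg (A 2 2)
  have mem {x b : ℤ} (h : |x| ≤ b) : x ∈ Finset.Icc (-b) b := Finset.mem_Icc.2 (abs_le.1 h)
  have key := charCubic_discr_nonpos_or_exists_root_of_small_entries
    (A 0 0) (mem (by linarith)) (A 0 1) (mem (by linarith)) (A 0 2) (mem (by linarith))
    (A 1 0) (mem (by linarith)) (A 1 1) (mem (by linarith)) (A 1 2) (mem (by linarith))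
    (A 2 0) (mem (by linarith)) (A 2 1) (mem (by linarith)) (A 2 2) (mem (by linarith))
  rw [← eta_fin_three A] at key
  refine key.imp_right fun ⟨r, _, hr⟩ ↦ ⟨r, ?_⟩
  rwa [IsRoot, ← toPoly_charCubic, Cubic.eval_toPoly]

end Matrix

theorem Cubic.irreducible_toPoly_map_rat_of_forall_ne_zero {P : Cubic ℤ} (ha : P.a = 1)
    (hP : ∀ r : ℤ, P.a * r ^ 3 + P.b * r ^ 2 + P.c * r + P.d ≠ 0) :
    Irreducible (P.toPoly.map (Int.castRingHom ℚ)) := by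
  have hmonic := P.monic_of_a_eq_one ha
  have hdeg := P.natDegree_of_a_ne_zero (ha ▸ one_ne_zero)
  refine (IsPrimitive.Int.irreducible_iff_irreducible_map_cast hmonic.isPrimitive).1 ?_
  rw [hmonic.irreducible_iff_roots_eq_zero_of_degree_le_three (by omega) (by omega),
    Multiset.eq_zero_iff_forall_notMem]
  intro r hr
  rw [mem_roots hmonic.ne_zero, IsRoot, Cubic.eval_toPoly] at hr
  exact hP r hr

/-- Its characteristic polynomial `X ^ 3 + X ^ 2 - 2 X - 1` is the minimal polynomial of
`2 cos (2π / 7)`. -/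
def hyperbolicNormFive : Matrix (Fin 3) (Fin 3) ℤ := !![-1, -1, 0; -1, 0, -1; 0, -1, 0]

theorem charCubic_hyperbolicNormFive : hyperbolicNormFive.charCubic = ⟨1, 1, -2, -1⟩ := rfl

theorem matNorm3_hyperbolicNormFive : matNorm3 hyperbolicNormFive = 5 := by decide

theorem irreducible_charpoly_hyperbolicNormFive :
    Irreducible (hyperbolicNormFive.charpoly.map (Int.castRingHom ℚ)) := by
  rw [← Matrix.toPoly_charCubic, charCubic_hyperbolicNormFive]
  refine Cubic.irreducible_toPoly_map_rat_of_forall_ne_zero rfl fun r hr ↦ ?_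
  have hunit : r * (r ^ 2 + r - 2) = 1 := by linear_combination hr
  rcases Int.isUnit_iff.1 (IsUnit.of_mul_eq_one _ hunit) with rfl | rfl <;> norm_num at hunit

theorem isHyperbolic3_hyperbolicNormFive : IsHyperbolic3 hyperbolicNormFive := by
  set p : ℝ[X] := (⟨1, 1, -2, -1⟩ : Cubic ℝ).toPoly
  have hp : hyperbolicNormFive.charpoly.map (Int.castRingHom ℝ) = p := by
    rw [← Matrix.toPoly_charCubic, charCubic_hyperbolicNormFive, ← Cubic.map_toPoly]
    simp [Cubic.map, p]
  have heval (x : ℝ) : p.eval x = x ^ 3 + x ^ 2 - 2 * x - 1 := by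
    rw [Cubic.eval_toPoly]; ring
  obtain ⟨r₁, ⟨-, hr₁⟩, hroot₁⟩ := intermediate_value_Ioo (by norm_num : (-2 : ℝ) ≤ -1)
    p.continuous.continuousOn (by norm_num [heval] : (0 : ℝ) ∈ Set.Ioo (p.eval (-2)) (p.eval (-1)))
  obtain ⟨r₂, ⟨hr₂, hr₂'⟩, hroot₂⟩ := intermediate_value_Ioo' (by norm_num : (-1 : ℝ) ≤ 0)
    p.continuous.continuousOn (by norm_num [heval] : (0 : ℝ) ∈ Set.Ioo (p.eval 0) (p.eval (-1)))
  obtain ⟨r₃, ⟨hr₃, -⟩, hroot₃⟩ := intermediate_value_Ioo (by norm_num : (1 : ℝ) ≤ 2)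
    p.continuous.continuousOn (by norm_num [heval] : (0 : ℝ) ∈ Set.Ioo (p.eval 1) (p.eval 2))
  refine ⟨r₁, r₂, r₃, by linarith, by linarith, by linarith, hp.trans ?_⟩
  exact Cubic.monic_of_a_eq_one'.eq_prod_X_sub_C_of_isRoot
    (Cubic.natDegree_of_a_ne_zero' one_ne_zero) (by linarith) (by linarith) (by linarith)
    hroot₁ hroot₂ hroot₃

/-- Every hyperbolic 3×3 integer matrix with characteristic polynomial irreducible over ℚ
has norm at least five, and there is such a matrix of norm exactly five. -/
theorem hyperbolic_norm_at_least_five :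
    (∀ A : Matrix (Fin 3) (Fin 3) ℤ,
      Irreducible (A.charpoly.map (Int.castRingHom ℚ)) → IsHyperbolic3 A → 5 ≤ matNorm3 A) ∧
    (∃ A : Matrix (Fin 3) (Fin 3) ℤ,
      Irreducible (A.charpoly.map (Int.castRingHom ℚ)) ∧ IsHyperbolic3 A ∧ matNorm3 A = 5) := by
  refine ⟨fun A hirr hhyp ↦ ?_, ⟨hyperbolicNormFive, irreducible_charpoly_hyperbolicNormFive,
    isHyperbolic3_hyperbolicNormFive, matNorm3_hyperbolicNormFive⟩⟩
  by_contra! hlt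
  rcases A.charCubic_discr_nonpos_or_exists_root_of_matNorm3_le_four (by omega) with hdisc | ⟨r, hr⟩
  · exact (Matrix.charCubic_discr_pos_of_isHyperbolic3 hhyp).not_ge hdisc
  · exact A.not_isRoot_charpoly_of_irreducible_map _ hirr (by simp) r hr
end
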